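/- Define M(x,y) = x^{3/2}·F₂(y/x) for x > 0, y > 0. Then for every x > 0, y > 0 and all real a, b, one has (M_{xx}(x,y) + M_y(x,y)/y)·a² + 2·M_{xy}(x,y)·a·b + M_{yy}(x,y)·b² ≤ 0, where subscripts denote partial derivatives; that is, the 2×2 matrix with rows (M_{xx} + M_y/y, M_{xy}) and (M_{xy}, M_{yy}) is negative semidefinite at every point (x,y) with x > 0, y > 0. -/

import Mathlib

open Real

noncomputable section

/-- The function `F₂(y) = (1/√2)·(2 − √(1+y²))·√(1 + √(1+y²))`. -/
def F2 (y : ℝ) : ℝ :=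
  (1 / Real.sqrt 2) * (2 - Real.sqrt (1 + y ^ 2)) * Real.sqrt (1 + Real.sqrt (1 + y ^ 2))

/-- The function M(x,y) = x^{3/2}·F₂(y/x). -/
def M (x y : ℝ) : ℝ := x ^ ((3 : ℝ) / 2) * F2 (y / x)

lemma M_eq (x y : ℝ) (hx : 0 < x) :
    M x y = (2*x - Real.sqrt (x^2+y^2)) * Real.sqrt (x + Real.sqrt (x^2+y^2)) / Real.sqrt 2 := by
  have hx' : x ≠ 0 := hx.ne'
  have hsx : Real.sqrt x ≠ 0 := by positivity
  have h1 : (1 : ℝ) + (y/x)^2 = (x^2+y^2)/x^2 := by field_simp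
  have h2 : Real.sqrt ((x^2+y^2)/x^2) = Real.sqrt (x^2+y^2) / x := by
    rw [Real.sqrt_div (by positivity), Real.sqrt_sq hx.le]
  have h3 : (1 : ℝ) + Real.sqrt (x^2+y^2)/x = (x + Real.sqrt (x^2+y^2))/x := by
    field_simp
  have h4 : Real.sqrt ((x + Real.sqrt (x^2+y^2))/x) = Real.sqrt (x + Real.sqrt (x^2+y^2)) / Real.sqrt x := by
    rw [Real.sqrt_div (by positivity)]
  have h5 : x ^ ((3:ℝ)/2) = Real.sqrt x ^ 3 := by
    rw [← Real.rpow_natCast (Real.sqrt x) 3, Real.sqrt_eq_rpow, ← Real.rpow_mul hx.le]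
    norm_num
  have hsx2 : Real.sqrt x ^ 2 = x := Real.sq_sqrt hx.le
  rw [M, F2, h1, h2, h3, h4, h5]
  field_simp
  linear_combination (2*x - Real.sqrt (x^2+y^2)) * hsx2

lemma hasDerivAt_rx (y : ℝ) {x : ℝ} (h : 0 < x^2 + y^2) :
    HasDerivAt (fun x' => Real.sqrt (x'^2+y^2)) (x / Real.sqrt (x^2+y^2)) x := by
  have h1 : HasDerivAt (fun x' : ℝ => x'^2 + y^2) (2*x) x := by
    simpa using ((hasDerivAt_pow 2 x).add_const (y^2))
  have := (Real.hasDerivAt_sqrt h.ne').comp x h1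
  refine this.congr_deriv ?_
  have hr : (0:ℝ) < Real.sqrt (x^2+y^2) := Real.sqrt_pos.2 h
  ring

lemma hasDerivAt_ry (x : ℝ) {y : ℝ} (h : 0 < x^2 + y^2) :
    HasDerivAt (fun y' => Real.sqrt (x^2+y'^2)) (y / Real.sqrt (x^2+y^2)) y := by
  have h1 : HasDerivAt (fun y' : ℝ => x^2 + y'^2) (2*y) y := by
    simpa using ((hasDerivAt_pow 2 y).const_add (x^2))
  have := (Real.hasDerivAt_sqrt h.ne').comp y h1
  refine this.congr_deriv ?_
  have hr : (0:ℝ) < Real.sqrt (x^2+y^2) := Real.sqrt_pos.2 h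
  ring

lemma hasDerivAt_Mx (y : ℝ) {x : ℝ} (hx : 0 < x) :
    HasDerivAt (fun x' => M x' y)
      (3/(2*Real.sqrt 2) * Real.sqrt (x + Real.sqrt (x^2+y^2))) x := by
  set r := Real.sqrt (x^2+y^2) with hrdef
  have hr0 : 0 < r := Real.sqrt_pos.2 (by positivity)
  have hr2 : r^2 = x^2+y^2 := Real.sq_sqrt (by positivity)
  have hxr : 0 < x + r := by linarith
  set s := Real.sqrt (x + r) with hsdef
  have hs0 : 0 < s := Real.sqrt_pos.2 hxr
  have hs2 : s^2 = x + r := Real.sq_sqrt hxr.le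
  have ht0 : (0:ℝ) < Real.sqrt 2 := by positivity
  have hR : HasDerivAt (fun x' => Real.sqrt (x'^2+y^2)) (x / r) x :=
    hasDerivAt_rx y (by positivity)
  have hU : HasDerivAt (fun x' => x' + Real.sqrt (x'^2+y^2)) (1 + x/r) x :=
    (hasDerivAt_id x).add hR
  have hV : HasDerivAt (fun x' => Real.sqrt (x' + Real.sqrt (x'^2+y^2)))
      (1/(2*s) * (1 + x/r)) x := by
    have := (Real.hasDerivAt_sqrt hxr.ne').comp x hU
    simpa [mul_comm, Function.comp_def, ← hsdef] using this
  have hW : HasDerivAt (fun x' => 2*x' - Real.sqrt (x'^2+y^2)) (2 - x/r) x := by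
    refine (((hasDerivAt_id x).const_mul 2).sub hR).congr_deriv ?_
    ring
  have hG : HasDerivAt (fun x' => (2*x' - Real.sqrt (x'^2+y^2)) * Real.sqrt (x' + Real.sqrt (x'^2+y^2)) / Real.sqrt 2)
      (((2 - x/r) * s + (2*x - r) * (1/(2*s) * (1 + x/r))) / Real.sqrt 2) x :=
    (hW.mul hV).div_const _
  have heq : ((2 - x/r) * s + (2*x - r) * (1/(2*s) * (1 + x/r))) / Real.sqrt 2
      = 3/(2*Real.sqrt 2) * s := by
    field_simp
    linear_combination (r - 2*x) * hs2
  rw [heq] at hG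
  refine hG.congr_of_eventuallyEq ?_
  filter_upwards [eventually_gt_nhds hx] with x' hx'
  exact M_eq x' y hx'

lemma hasDerivAt_My {x : ℝ} (hx : 0 < x) (y : ℝ) :
    HasDerivAt (fun y' => M x y')
      (-(3/(2*Real.sqrt 2)) * y / Real.sqrt (x + Real.sqrt (x^2+y^2))) y := by
  set r := Real.sqrt (x^2+y^2) with hrdef
  have hr0 : 0 < r := Real.sqrt_pos.2 (by positivity)
  have hr2 : r^2 = x^2+y^2 := Real.sq_sqrt (by positivity)
  have hxr : 0 < x + r := by linarith
  set s := Real.sqrt (x + r) with hsdef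
  have hs0 : 0 < s := Real.sqrt_pos.2 hxr
  have hs2 : s^2 = x + r := Real.sq_sqrt hxr.le
  have ht0 : (0:ℝ) < Real.sqrt 2 := by positivity
  have hR : HasDerivAt (fun y' => Real.sqrt (x^2+y'^2)) (y / r) y :=
    hasDerivAt_ry x (by positivity)
  have hU : HasDerivAt (fun y' => x + Real.sqrt (x^2+y'^2)) (y/r) y := hR.const_add x
  have hV : HasDerivAt (fun y' => Real.sqrt (x + Real.sqrt (x^2+y'^2)))
      (1/(2*s) * (y/r)) y := by
    have := (Real.hasDerivAt_sqrt hxr.ne').comp y hU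
    simpa [mul_comm, Function.comp_def, ← hsdef] using this
  have hW : HasDerivAt (fun y' => 2*x - Real.sqrt (x^2+y'^2)) (-(y/r)) y := by
    simpa using hR.const_sub (2*x)
  have hG : HasDerivAt (fun y' => (2*x - Real.sqrt (x^2+y'^2)) * Real.sqrt (x + Real.sqrt (x^2+y'^2)) / Real.sqrt 2)
      ((-(y/r) * s + (2*x - r) * (1/(2*s) * (y/r))) / Real.sqrt 2) y :=
    (hW.mul hV).div_const _
  have heq : (-(y/r) * s + (2*x - r) * (1/(2*s) * (y/r))) / Real.sqrt 2
      = -(3/(2*Real.sqrt 2)) * y / s := by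
    field_simp
    linear_combination (-(2*y)) * hs2
  rw [heq] at hG
  refine hG.congr_of_eventuallyEq ?_
  filter_upwards with y'
  exact M_eq x y' hx

theorem M_matrix_neg_semidef (x y : ℝ) (hx : 0 < x) (hy : 0 < y) (a b : ℝ) :
    (deriv (fun x' => deriv (fun x'' => M x'' y) x') x
        + deriv (fun y' => M x y') y / y) * a ^ 2
      + 2 * (deriv (fun x' => deriv (fun y' => M x' y') y) x) * a * b
      + deriv (fun y' => deriv (fun y'' => M x y'') y') y * b ^ 2 ≤ 0 := by
  set r := Real.sqrt (x^2+y^2) with hrdef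
  have hr0 : 0 < r := Real.sqrt_pos.2 (by positivity)
  have hr2 : r^2 = x^2+y^2 := Real.sq_sqrt (by positivity)
  have hxr : 0 < x + r := by linarith
  have hxltr : x < r := by nlinarith
  set s := Real.sqrt (x + r) with hsdef
  have hs0 : 0 < s := Real.sqrt_pos.2 hxr
  have hs2 : s^2 = x + r := Real.sq_sqrt hxr.le
  set t := Real.sqrt 2 with htdef
  have ht0 : (0:ℝ) < t := by positivity
  have ht2 : t^2 = 2 := Real.sq_sqrt (by norm_num)
  -- second derivative in x
  have hR : HasDerivAt (fun x' => Real.sqrt (x'^2+y^2)) (x / r) x :=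
    hasDerivAt_rx y (by positivity)
  have hU : HasDerivAt (fun x' => x' + Real.sqrt (x'^2+y^2)) (1 + x/r) x :=
    (hasDerivAt_id x).add hR
  have hV : HasDerivAt (fun x' => Real.sqrt (x' + Real.sqrt (x'^2+y^2)))
      (1/(2*s) * (1 + x/r)) x := by
    have := (Real.hasDerivAt_sqrt hxr.ne').comp x hU
    simpa [mul_comm, Function.comp_def, ← hsdef] using this
  have hMxx : deriv (fun x' => deriv (fun x'' => M x'' y) x') x = 3/(4*t*r*s)*(x+r) := by
    have hev : (fun x' => deriv (fun x'' => M x'' y) x')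
        =ᶠ[nhds x] (fun x' => 3/(2*t) * Real.sqrt (x' + Real.sqrt (x'^2+y^2))) := by
      filter_upwards [eventually_gt_nhds hx] with x' hx'
      exact (hasDerivAt_Mx y hx').deriv
    rw [hev.deriv_eq]
    have h2 : HasDerivAt (fun x' => 3/(2*t) * Real.sqrt (x' + Real.sqrt (x'^2+y^2)))
        (3/(2*t) * (1/(2*s) * (1 + x/r))) x := hV.const_mul _
    rw [h2.deriv]
    field_simp
    ring
  -- mixed second derivative
  have hMxy : deriv (fun x' => deriv (fun y' => M x' y') y) x = 3/(4*t*r*s)*y := by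
    have hev : (fun x' => deriv (fun y' => M x' y') y)
        =ᶠ[nhds x] (fun x' => -(3/(2*t)) * y / Real.sqrt (x' + Real.sqrt (x'^2+y^2))) := by
      filter_upwards [eventually_gt_nhds hx] with x' hx'
      exact (hasDerivAt_My hx' y).deriv
    rw [hev.deriv_eq]
    have h2 : HasDerivAt (fun x' => -(3/(2*t)) * y / Real.sqrt (x' + Real.sqrt (x'^2+y^2)))
        ((0 * s - (-(3/(2*t)) * y) * (1/(2*s) * (1 + x/r))) / s^2) x :=
      (hasDerivAt_const x (-(3/(2*t)) * y)).div hV hs0.ne'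
    rw [h2.deriv]
    field_simp
    linear_combination (-(12*y)) * hs2
  -- second derivative in y
  have hMyy : deriv (fun y' => deriv (fun y'' => M x y'') y') y = -(3/(4*t*r*s))*(x+r) := by
    have hev : (fun y' => deriv (fun y'' => M x y'') y')
        = (fun y' => -(3/(2*t)) * y' / Real.sqrt (x + Real.sqrt (x^2+y'^2))) := by
      funext y'
      exact (hasDerivAt_My hx y').deriv
    rw [hev]
    have hRy : HasDerivAt (fun y' => Real.sqrt (x^2+y'^2)) (y / r) y :=
      hasDerivAt_ry x (by positivity)
    have hUy : HasDerivAt (fun y' => x + Real.sqrt (x^2+y'^2)) (y/r) y := hRy.const_add x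
    have hVy : HasDerivAt (fun y' => Real.sqrt (x + Real.sqrt (x^2+y'^2)))
        (1/(2*s) * (y/r)) y := by
      have := (Real.hasDerivAt_sqrt hxr.ne').comp y hUy
      simpa [mul_comm, Function.comp_def, ← hsdef] using this
    have hNum : HasDerivAt (fun y' : ℝ => -(3/(2*t)) * y') (-(3/(2*t))) y := by
      simpa using (hasDerivAt_id y).const_mul (-(3/(2*t)))
    have h2 : HasDerivAt (fun y' => -(3/(2*t)) * y' / Real.sqrt (x + Real.sqrt (x^2+y'^2)))
        ((-(3/(2*t)) * s - (-(3/(2*t)) * y) * (1/(2*s) * (y/r))) / s^2) y :=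
      hNum.div hVy hs0.ne'
    rw [h2.deriv]
    field_simp
    linear_combination (4*(x-r)) * hs2 - 4 * hr2
  have hMy : deriv (fun y' => M x y') y = -(3/(2*t)) * y / s :=
    (hasDerivAt_My hx y).deriv
  rw [hMxx, hMxy, hMyy, hMy]
  have hA : 3/(4*t*r*s)*(x+r) + (-(3/(2*t)) * y / s) / y = 3/(4*t*r*s)*(x-r) := by
    rw [div_div]
    field_simp
    ring
  rw [hA]
  have hK : (0:ℝ) < 3/(4*t*r*s) := by positivity
  have hquad : (x - r)*a^2 + 2*y*a*b - (x+r)*b^2 ≤ 0 := by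
    nlinarith [sq_nonneg ((x - r)*a + y*b), sq_nonneg a, sq_nonneg b, mul_pos hy hr0]
  have h3 : 3/(4*t*r*s) * ((x - r)*a^2 + 2*y*a*b - (x+r)*b^2) ≤ 0 :=
    mul_nonpos_of_nonneg_of_nonpos hK.le hquad
  nlinarith [h3]
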